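/- Let u be an alternating permutation of length 2n avoiding 2143 with exactly b active values, and let w be an alternating permutation of length 2n+2 avoiding 2143 whose first 2n entries are order-isomorphic to u. Then the number of active values for w is at most b + 2. -/

import Mathlib

/-- A word `w : Fin n → ℕ` is a permutation of length `n` (1-indexed values). -/
def IsPermWord (n : ℕ) (w : Fin n → ℕ) : Prop :=
  Function.Injective w ∧ Set.range w = Set.Icc 1 n

/-- `w` contains the pattern 2143. -/
def Contains2143 {n : ℕ} (w : Fin n → ℕ) : Prop :=
  ∃ i1 i2 i3 i4 : Fin n, i1 < i2 ∧ i2 < i3 ∧ i3 < i4 ∧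
    w i2 < w i1 ∧ w i1 < w i4 ∧ w i4 < w i3

/-- `w` contains the pattern 1234 (a four-term increasing subsequence). -/
def Contains1234 {n : ℕ} (w : Fin n → ℕ) : Prop :=
  ∃ i1 i2 i3 i4 : Fin n, i1 < i2 ∧ i2 < i3 ∧ i3 < i4 ∧
    w i1 < w i2 ∧ w i2 < w i3 ∧ w i3 < w i4

/-- `w` contains the pattern `p`. -/
def ContainsPat {n k : ℕ} (w : Fin n → ℕ) (p : Fin k → ℕ) : Prop :=
  ∃ f : Fin k → Fin n, StrictMono f ∧ ∀ a b : Fin k, p a < p b ↔ w (f a) < w (f b)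

/-- The extension `w ← c`: bump every entry `≥ c` by one and append `c`. -/
def extendBy {n : ℕ} (w : Fin n → ℕ) (c : ℕ) : Fin (n + 1) → ℕ :=
  fun j => if h : (j : ℕ) < n then (if c ≤ w ⟨j, h⟩ then w ⟨j, h⟩ + 1 else w ⟨j, h⟩) else c

/-- `c` is an active value for `w` (with respect to the pattern 2143). -/
def IsActive {n : ℕ} (w : Fin n → ℕ) (c : ℕ) : Prop :=
  ¬ Contains2143 (extendBy w c)

/-- `w` is (up-down) alternating: `w 1 < w 2 > w 3 < w 4 > ...` (1-indexed). -/
def Alternating {n : ℕ} (w : Fin n → ℕ) : Prop :=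
  ∀ (i : ℕ) (h : i + 1 < n),
    if i % 2 = 0 then w ⟨i, by omega⟩ < w ⟨i + 1, h⟩ else w ⟨i + 1, h⟩ < w ⟨i, by omega⟩

/-- The set of active values for `w` among `{1, ..., n+1}`. -/
def activeSet {n : ℕ} (w : Fin n → ℕ) : Set ℕ :=
  {c | 1 ≤ c ∧ c ≤ n + 1 ∧ IsActive w c}

/-- The reverse-complement of a word of length `m` (1-indexed values). -/
def revComp {m : ℕ} (w : Fin m → ℕ) : Fin m → ℕ :=
  fun i => m + 1 - w i.rev

/-- `T` is a standard Young tableau of rectangular shape `(n, n, n)`,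
entries `1, ..., 3n` each used once, rows and columns strictly increasing. -/
structure IsSYT3 (n : ℕ) (T : Fin 3 → Fin n → ℕ) : Prop where
  inj : Function.Injective (fun p : Fin 3 × Fin n => T p.1 p.2)
  range_eq : (Set.range fun p : Fin 3 × Fin n => T p.1 p.2) = Set.Icc 1 (3 * n)
  row_inc : ∀ i : Fin 3, StrictMono (T i)
  col_inc : ∀ j : Fin n, StrictMono (fun i : Fin 3 => T i j)

/-- `(T1, T2, T3)` is a shifted standard Young tableau of shape `(n+2, n+1, n)`:
row `i` is indented `i - 1` columns; entries `1, ..., 3n+3` each used once,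
rows strictly increasing, and (shifted) columns strictly increasing. -/
structure IsShiftedSYT (n : ℕ) (T1 : Fin (n + 2) → ℕ) (T2 : Fin (n + 1) → ℕ)
    (T3 : Fin n → ℕ) : Prop where
  inj : Function.Injective (Sum.elim T1 (Sum.elim T2 T3))
  range_eq : Set.range (Sum.elim T1 (Sum.elim T2 T3)) = Set.Icc 1 (3 * n + 3)
  row1 : StrictMono T1
  row2 : StrictMono T2
  row3 : StrictMono T3
  col12 : ∀ j : Fin (n + 1), T1 j.succ < T2 j
  col23 : ∀ j : Fin n, T2 j.succ < T3 j

/-!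
Let `u` be order-isomorphic to the subword `w ∘ e` of `w`. If `c` is active for `w`, then the
rank `d` that `c` would take among the entries of `w ∘ e` is active for `u`, because a 2143 in
`u ← d` lifts to a 2143 in `w ← c`. Two values `c < c'` have the same rank only when no entry of
`w ∘ e` lies in `[c, c')`; then `c' - 1` is one of the `m' - m` entries of `w` outside the
subword, so passing from `w` to `u` loses at most `m' - m` active values.
-/

lemma IsPermWord.card_filter_le {m : ℕ} {v : Fin m → ℕ} (hv : IsPermWord m v) (p : Fin m) :
    (Finset.univ.filter fun q => v q ≤ v p).card = v p := by
  have hmem : ∀ q, v q ∈ Set.Icc 1 m := fun q => hv.2 ▸ ⟨q, rfl⟩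
  have himg : (Finset.univ.filter fun q => v q ≤ v p).image v = Finset.Icc 1 (v p) := by
    ext y
    simp only [Finset.mem_image, Finset.mem_filter, Finset.mem_univ, true_and, Finset.mem_Icc]
    constructor
    · rintro ⟨q, hq, rfl⟩
      exact ⟨(hmem q).1, hq⟩
    · rintro ⟨h1, h2⟩
      obtain ⟨q, rfl⟩ : y ∈ Set.range v := hv.2 ▸ ⟨h1, h2.trans (hmem p).2⟩
      exact ⟨q, h2, rfl⟩
  rw [← Finset.card_image_of_injective _ hv.1, himg, Nat.card_Icc, Nat.add_sub_cancel]

lemma Contains2143.of_strictMono {a b : ℕ} {v : Fin a → ℕ} {v' : Fin b → ℕ} (g : Fin a → Fin b)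
    (hg : StrictMono g) (hlt : ∀ i j, v i < v j → v' (g i) < v' (g j)) :
    Contains2143 v → Contains2143 v' := by
  rintro ⟨i1, i2, i3, i4, h12, h23, h34, h21, h14, h43⟩
  exact ⟨g i1, g i2, g i3, g i4, hg h12, hg h23, hg h34, hlt _ _ h21, hlt _ _ h14, hlt _ _ h43⟩

@[simp]
lemma extendBy_castSucc {m : ℕ} (v : Fin m → ℕ) (c : ℕ) (i : Fin m) :
    extendBy v c i.castSucc = if c ≤ v i then v i + 1 else v i := by
  simp [extendBy]

@[simp]
lemma extendBy_last {m : ℕ} (v : Fin m → ℕ) (c : ℕ) : extendBy v c (Fin.last m) = c := by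
  simp [extendBy]

lemma activeSet_finite {m : ℕ} (v : Fin m → ℕ) : (activeSet v).Finite :=
  (Set.finite_Icc 1 (m + 1)).subset fun _ hc => ⟨hc.1, hc.2.1⟩

lemma Fin.strictMono_lastCases_castSucc {m m' : ℕ} {e : Fin m → Fin m'} (he : StrictMono e) :
    StrictMono
      (Fin.lastCases (Fin.last m') fun i => (e i).castSucc : Fin (m + 1) → Fin (m' + 1)) := by
  intro x y hxy
  induction y using Fin.lastCases with
  | last =>
    induction x using Fin.lastCases with
    | last => exact absurd hxy (lt_irrefl _)
    | cast i => simp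
  | cast j =>
    induction x using Fin.lastCases with
    | last => exact absurd hxy (Fin.castSucc_lt_last j).not_gt
    | cast i => simpa using he (Fin.castSucc_lt_castSucc_iff.mp hxy)

section Subword

variable {m m' : ℕ} {u : Fin m → ℕ} {w : Fin m' → ℕ} {e : Fin m → Fin m'}

lemma IsActive.of_strictMono (he : StrictMono e) (hiso : ∀ p q, u p < u q → w (e p) < w (e q))
    {c d : ℕ} (hcd : ∀ p, u p < d ↔ w (e p) < c) (hc : IsActive w c) : IsActive u d := by
  refine fun hu => hc (hu.of_strictMono _ (Fin.strictMono_lastCases_castSucc he) ?_)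
  intro x y hxy
  induction x using Fin.lastCases <;> induction y using Fin.lastCases <;>
    simp only [Fin.lastCases_last, Fin.lastCases_castSucc, extendBy_castSucc,
      extendBy_last] at hxy ⊢
  case cast.last p => have := hcd p; split_ifs at hxy ⊢ <;> omega
  case last.cast q => have := hcd q; split_ifs at hxy ⊢ <;> omega
  case cast.cast p q =>
    have := hiso p q; have := hcd p; have := hcd q; split_ifs at hxy ⊢ <;> omega
  case last.last => exact absurd hxy (lt_irrefl _)

variable (w e) in
def stdValue (c : ℕ) : ℕ :=
  (Finset.univ.filter fun p => w (e p) < c).card + 1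

lemma stdValue_le (c : ℕ) : stdValue w e c ≤ m + 1 :=
  Nat.add_le_add_right ((Finset.card_filter_le _ _).trans_eq (Finset.card_fin m)) 1

lemma lt_stdValue_iff (hu : IsPermWord m u) (hiso : ∀ p q, u p < u q ↔ w (e p) < w (e q))
    (p : Fin m) (c : ℕ) : u p < stdValue w e c ↔ w (e p) < c := by
  rw [stdValue, Nat.lt_add_one_iff]
  constructor
  · intro h
    by_contra! hc
    have hsub : (Finset.univ.filter fun q => w (e q) < c) ⊆
        (Finset.univ.filter fun q => u q ≤ u p).erase p := by
      intro q hq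
      have hqp := (hiso q p).mpr ((Finset.mem_filter.mp hq).2.trans_le hc)
      simpa using ⟨fun hqp' => (hqp' ▸ hqp).false, hqp.le⟩
    have hcard := Finset.card_le_card hsub
    rw [Finset.card_erase_of_mem (by simp), hu.card_filter_le p] at hcard
    have hpos : 1 ≤ u p := (hu.2 ▸ Set.mem_range_self p : u p ∈ Set.Icc 1 m).1
    omega
  · intro h
    calc u p = _ := (hu.card_filter_le p).symm
      _ ≤ _ := Finset.card_le_card fun q hq => by
        have hqp : w (e q) ≤ w (e p) :=
          not_lt.mp fun h' => ((hiso p q).mpr h').not_ge (by simpa using hq)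
        simpa using hqp.trans_lt h

lemma stdValue_lt_stdValue {p : Fin m} {c c' : ℕ} (hc : c ≤ w (e p)) (hc' : w (e p) < c') :
    stdValue w e c < stdValue w e c' := by
  refine Nat.add_lt_add_right (Finset.card_lt_card ⟨fun q hq => ?_, fun hsub => ?_⟩) 1
  · simp only [Finset.mem_filter, Finset.mem_univ, true_and] at hq ⊢
    omega
  · exact (lt_irrefl _) ((Finset.mem_filter.mp (hsub (by simpa using hc'))).2.trans_le hc)

lemma stdValue_lt_of_lt (hw : Set.range w = Set.Icc 1 m') {c c' : ℕ} (hc : 1 ≤ c)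
    (hcc' : c < c') (hc' : c' ≤ m' + 1) (hnot : c' ∉ (fun j => w j + 1) '' (Set.range e)ᶜ) :
    stdValue w e c < stdValue w e c' := by
  obtain ⟨j, hj⟩ : c' - 1 ∈ Set.range w := hw ▸ ⟨by omega, by omega⟩
  obtain ⟨p, rfl⟩ : j ∈ Set.range e := by
    by_contra hj'
    exact hnot ⟨j, hj', show w j + 1 = c' by omega⟩
  exact stdValue_lt_stdValue (p := p) (by omega) (by omega)

lemma stdValue_injOn (hw : Set.range w = Set.Icc 1 m') :
    Set.InjOn (stdValue w e) (activeSet w \ (fun j => w j + 1) '' (Set.range e)ᶜ) := by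
  intro c ⟨⟨hc1, hc2, _⟩, hc⟩ c' ⟨⟨hc1', hc2', _⟩, hc'⟩ heq
  rcases lt_trichotomy c c' with hlt | rfl | hlt
  · exact absurd heq (stdValue_lt_of_lt hw hc1 hlt hc2' hc').ne
  · rfl
  · exact absurd heq (stdValue_lt_of_lt hw hc1' hlt hc2 hc).ne'

theorem ncard_activeSet_le_of_strictMono (hu : IsPermWord m u)
    (hw : Set.range w = Set.Icc 1 m') (he : StrictMono e)
    (hiso : ∀ p q, u p < u q ↔ w (e p) < w (e q)) :
    (activeSet w).ncard ≤ (activeSet u).ncard + (m' - m) := by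
  set E := (fun j => w j + 1) '' (Set.range e)ᶜ
  have hE : E.ncard ≤ m' - m := by
    refine (Set.ncard_image_le (Set.toFinite _)).trans_eq ?_
    rw [Set.ncard_compl _, Set.ncard_range_of_injective he.injective, Nat.card_fin, Nat.card_fin]
  have hmaps : ∀ c ∈ activeSet w \ E, stdValue w e c ∈ activeSet u := fun c ⟨⟨_, _, hc⟩, _⟩ =>
    ⟨Nat.le_add_left 1 _, stdValue_le c,
      hc.of_strictMono he (fun p q => (hiso p q).mp) (lt_stdValue_iff hu hiso · c)⟩
  calc (activeSet w).ncard ≤ (activeSet w \ E).ncard + E.ncard :=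
        Set.ncard_le_ncard_sdiff_add_ncard _ _ (Set.toFinite _)
    _ ≤ (activeSet u).ncard + (m' - m) :=
        add_le_add
          (Set.ncard_le_ncard_of_injOn _ hmaps (stdValue_injOn hw) (activeSet_finite u)) hE

end Subword

/-- a child has at most `b + 2` active values. -/
theorem stmt4 (n : ℕ) (u : Fin (2 * n) → ℕ)
    (hu : IsPermWord (2 * n) u)
    (b : ℕ) (hb : (activeSet u).ncard = b)
    (w : Fin (2 * n + 2) → ℕ) (hw : IsPermWord (2 * n + 2) w)
    (hiso : ∀ p q : Fin (2 * n),
      u p < u q ↔ w (Fin.castLE (by omega) p) < w (Fin.castLE (by omega) q)) :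
    (activeSet w).ncard ≤ b + 2 := by
  have hle := ncard_activeSet_le_of_strictMono hu hw.2 (Fin.strictMono_castLE _) hiso
  omega
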